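/- Let Q be a quandle and C a maximal R-clique of Q with more than one element. Then C, regarded as a quandle in its own right (it is a subquandle of Q), is not connected. -/

import Mathlib

/-- A (right) rack: a set with a binary operation `mul` such that every right
translation `R_x : y ↦ y * x` is a bijection (with inverse given by the right
division `div`), satisfying right self-distributivity. -/
class RightRack (Q : Type*) where
  mul : Q → Q → Q
  div : Q → Q → Q
  div_mul : ∀ x y : Q, mul (div x y) y = x
  mul_div : ∀ x y : Q, div (mul x y) y = x
  self_distrib : ∀ x y z : Q, mul (mul x y) z = mul (mul x z) (mul y z)

namespace RightRack

/-- The right translation `R_x` as a permutation of `Q`. -/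
def rt {Q : Type*} [RightRack Q] (x : Q) : Equiv.Perm Q where
  toFun y := mul y x
  invFun y := div y x
  left_inv y := mul_div y x
  right_inv y := div_mul y x

/-- The right multiplication group `Rmlt(Q)`: the subgroup of the symmetric group
on `Q` generated by all right translations. -/
def rmlt (Q : Type*) [RightRack Q] : Subgroup (Equiv.Perm Q) :=
  Subgroup.closure (Set.range (rt : Q → Equiv.Perm Q))

end RightRack

/-- A quandle: an idempotent rack. -/
class RightQuandle (Q : Type*) extends RightRack Q where
  idem : ∀ x : Q, mul x x = x

/-- The R-commuting relation: `a ∼ b` iff `R_a ∘ R_b = R_b ∘ R_a`. -/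
def rsim {Q : Type*} [RightRack Q] (a b : Q) : Prop :=
  ∀ y : Q, RightRack.mul (RightRack.mul y b) a = RightRack.mul (RightRack.mul y a) b

/-!
Self-distributivity says `R_{x * c} = R_c R_x R_c⁻¹`, hence `R_{g x} = g R_x g⁻¹` for every `g ∈ Rmlt(Q)`.
Fix `a ∈ C`. Since `R_a` commutes with every generator `R_c` (`c ∈ C`), every `g ∈ ⟨R_c | c ∈ C⟩` gives
`R_{g a} = R_a`; if this group is transitive on `C`, all `R_c` (`c ∈ C`) equal `R_a`. The group is then
generated by `R_a` alone, which fixes `a` because `a * a = a`, so the orbit of `a` is `{a}`, although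
`C` has a second element.
-/

namespace RightRack

variable {Q : Type*} [RightRack Q]

lemma rt_mul (x c : Q) : rt (mul x c) = rt c * rt x * (rt c)⁻¹ := by
  rw [eq_mul_inv_iff_mul_eq]
  ext y
  exact (self_distrib y x c).symm

lemma rt_apply_of_mem_rmlt {g : Equiv.Perm Q} (hg : g ∈ rmlt Q) (x : Q) :
    rt (g x) = g * rt x * g⁻¹ := by
  induction hg using Subgroup.closure_induction generalizing x with
  | mem _ hg =>
    obtain ⟨c, rfl⟩ := hg
    exact rt_mul x c
  | one => simp
  | mul g h _ _ ihg ihh =>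
    rw [Equiv.Perm.mul_apply, ihg, ihh]
    group
  | inv g _ ih =>
    calc rt (g⁻¹ x) = g⁻¹ * (g * rt (g⁻¹ x) * g⁻¹) * g := by group
      _ = g⁻¹ * rt x * g := by
        rw [← ih, ← Equiv.Perm.mul_apply, mul_inv_cancel, Equiv.Perm.one_apply]

lemma rsim_iff_commute (a b : Q) : rsim a b ↔ Commute (rt a) (rt b) := by
  rw [Commute, SemiconjBy, Equiv.ext_iff]
  rfl

lemma rt_apply_eq_of_forall_commute {S : Set Q} {x : Q} (hx : ∀ c ∈ S, Commute (rt x) (rt c))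
    {g : Equiv.Perm Q} (hg : g ∈ Subgroup.closure (rt '' S)) : rt (g x) = rt x := by
  have hcomm : g ∈ Subgroup.centralizer {rt x} := by
    refine Subgroup.closure_le _ |>.mpr ?_ hg
    rintro _ ⟨c, hc, rfl⟩
    exact Subgroup.mem_centralizer_singleton_iff.mpr (hx c hc).symm
  have hmem : g ∈ rmlt Q := Subgroup.closure_mono (Set.image_subset_range _ _) hg
  rw [rt_apply_of_mem_rmlt hmem, Subgroup.mem_centralizer_singleton_iff.mp hcomm, mul_inv_cancel_right]

end RightRack

open RightRack

lemma RightQuandle.rt_apply_self {Q : Type*} [RightQuandle Q] (a : Q) : rt a a = a :=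
  RightQuandle.idem a

theorem maximal_rclique_not_connected_general {Q : Type*} [RightQuandle Q]
    (C : Set Q) (hC : ∀ a ∈ C, ∀ b ∈ C, rsim a b)
    (hbig : ∃ a ∈ C, ∃ b ∈ C, a ≠ b) :
    ¬ (∀ a ∈ C, ∀ b ∈ C,
        ∃ g ∈ Subgroup.closure ((RightRack.rt : Q → Equiv.Perm Q) '' C), g a = b) := by
  intro htrans
  obtain ⟨a, ha, b, hb, hab⟩ := hbig
  have hrt : ∀ c ∈ C, rt c = rt a := fun c hc => by
    obtain ⟨g, hg, rfl⟩ := htrans a ha c hc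
    exact rt_apply_eq_of_forall_commute (fun c hc => (rsim_iff_commute a c).mp (hC a ha c hc)) hg
  have hgen : Subgroup.closure (rt '' C) = Subgroup.zpowers (rt a) := by
    rw [Set.image_congr hrt, Set.Nonempty.image_const ⟨a, ha⟩, Subgroup.zpowers_eq_closure]
  obtain ⟨g, hg, rfl⟩ := htrans a ha b hb
  rw [hgen] at hg
  obtain ⟨n, rfl⟩ := hg
  exact hab (Equiv.Perm.zpow_apply_eq_self_of_apply_eq_self (RightQuandle.rt_apply_self a) n).symm

/-- Let `Q` be a quandle and `C` a maximal R-clique of `Q` with more than one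
element. Then `C`, regarded as a quandle in its own right (it is a subquandle of
`Q`, closed under `*` and `/`, so its right multiplication group is generated by
the right translations by elements of `C`, restricted to `C`), is not connected:
the subgroup of the symmetric group on `Q` generated by the right translations
`R_c`, `c ∈ C`, does not act transitively on `C`. -/
theorem maximal_rclique_not_connected {Q : Type*} [RightQuandle Q]
    (C : Set Q) (hC : ∀ a ∈ C, ∀ b ∈ C, rsim a b)
    (hmax : ∀ D : Set Q, (∀ a ∈ D, ∀ b ∈ D, rsim a b) → C ⊆ D → D = C)
    (hbig : ∃ a ∈ C, ∃ b ∈ C, a ≠ b) :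
    ¬ (∀ a ∈ C, ∀ b ∈ C,
        ∃ g ∈ Subgroup.closure ((RightRack.rt : Q → Equiv.Perm Q) '' C), g a = b) :=
  maximal_rclique_not_connected_general C hC hbig
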